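/- Let (pₙ)ₙ≥1 be nonnegative weights with Σₙ pₙ = 1, and let (uₙ), (vₙ) be sequences of reals with u ≤ uₙ ≤ U and v ≤ vₙ ≤ V for all n. Then |Σₙ pₙuₙvₙ − (Σₙ pₙuₙ)(Σₙ pₙvₙ)| ≤ (1/4)(U − u)(V − v). -/

import Mathlib

/-!
Under a probability measure, Cauchy–Schwarz for the covariance gives
`cov[X, Y]² ≤ Var[X] Var[Y]`, and Popoviciu's inequality bounds the variance of a variable
with values in `[a, b]` by `((b - a) / 2)²`. The discrete statement is the case of the
probability measure on `ℕ` with masses `pₙ`, where expectations are the weighted series.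
-/

open MeasureTheory ProbabilityTheory

namespace ProbabilityTheory

variable {Ω : Type*} {mΩ : MeasurableSpace Ω} {μ : Measure Ω} {X Y : Ω → ℝ}

lemma covariance_sq_le_variance_mul_variance [IsFiniteMeasure μ] (hX : MemLp X 2 μ)
    (hY : MemLp Y 2 μ) : cov[X, Y; μ] ^ 2 ≤ Var[X; μ] * Var[Y; μ] := by
  have hquad : ∀ t : ℝ, 0 ≤ Var[Y; μ] * (t * t) + 2 * cov[X, Y; μ] * t + Var[X; μ] := by
    intro t
    have hvar := variance_nonneg (X + t • Y) μ
    rw [variance_add hX (hY.const_smul t), covariance_smul_right, variance_smul] at hvar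
    linarith
  have hdiscrim := discrim_le_zero hquad
  rw [discrim] at hdiscrim
  linarith

/-- Grüss' inequality. -/
lemma abs_covariance_le_of_bounded [IsProbabilityMeasure μ] {a b c d : ℝ}
    (hXb : ∀ᵐ ω ∂μ, X ω ∈ Set.Icc a b) (hYb : ∀ᵐ ω ∂μ, Y ω ∈ Set.Icc c d)
    (hX : AEMeasurable X μ) (hY : AEMeasurable Y μ) :
    |cov[X, Y; μ]| ≤ (b - a) * (d - c) / 4 := by
  obtain ⟨ω, ⟨ha, hb⟩, hc, hd⟩ := (hXb.and hYb).exists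
  apply abs_le_of_sq_le_sq _ (by nlinarith)
  calc cov[X, Y; μ] ^ 2 ≤ Var[X; μ] * Var[Y; μ] :=
        covariance_sq_le_variance_mul_variance (memLp_of_bounded hXb hX.aestronglyMeasurable 2)
          (memLp_of_bounded hYb hY.aestronglyMeasurable 2)
    _ ≤ ((b - a) / 2) ^ 2 * ((d - c) / 2) ^ 2 :=
        mul_le_mul (variance_le_sq_of_bounded hXb hX) (variance_le_sq_of_bounded hYb hY)
          (variance_nonneg _ _) (sq_nonneg _)
    _ = ((b - a) * (d - c) / 4) ^ 2 := by ring

end ProbabilityTheory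

namespace PMF

variable {α : Type*} {p : α → ℝ}

noncomputable def ofReal (p : α → ℝ) (hp : ∀ a, 0 ≤ p a) (hp1 : HasSum p 1) : PMF α :=
  ⟨fun a ↦ ENNReal.ofReal (p a), by
    have hsum := ENNReal.ofReal_tsum_of_nonneg hp hp1.summable
    rw [hp1.tsum_eq, ENNReal.ofReal_one] at hsum
    exact hsum ▸ ENNReal.summable.hasSum⟩

lemma ofReal_apply (hp : ∀ a, 0 ≤ p a) (hp1 : HasSum p 1) (a : α) :
    ofReal p hp hp1 a = ENNReal.ofReal (p a) := rfl

lemma integral_toMeasure_ofReal [MeasurableSpace α] [MeasurableSingletonClass α]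
    (hp : ∀ a, 0 ≤ p a) (hp1 : HasSum p 1) {f : α → ℝ}
    (hf : Integrable f (ofReal p hp hp1).toMeasure) :
    ∫ a, f a ∂(ofReal p hp hp1).toMeasure = ∑' a, p a * f a := by
  rw [integral_eq_tsum _ _ hf]
  exact tsum_congr fun a ↦ by rw [smul_eq_mul, ofReal_apply, ENNReal.toReal_ofReal (hp a)]

end PMF

theorem gruss_discrete (p u v : ℕ → ℝ) (hp : ∀ n, 0 ≤ p n) (hp1 : ∑' n, p n = 1)
    (lu Lu lv Lv : ℝ) (hu : ∀ n, lu ≤ u n ∧ u n ≤ Lu) (hv : ∀ n, lv ≤ v n ∧ v n ≤ Lv) :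
    |(∑' n, p n * u n * v n) - (∑' n, p n * u n) * (∑' n, p n * v n)| ≤
      (1 / 4) * (Lu - lu) * (Lv - lv) := by
  have hps : Summable p := by
    by_contra h
    simp [tsum_eq_zero_of_not_summable h] at hp1
  set μ := (PMF.ofReal p hp (hp1 ▸ hps.hasSum)).toMeasure
  have hmeas (f : ℕ → ℝ) : AEMeasurable f μ := (measurable_of_countable f).aemeasurable
  have hu2 : MemLp u 2 μ := memLp_of_bounded (ae_of_all _ hu) (hmeas u).aestronglyMeasurable 2
  have hv2 : MemLp v 2 μ := memLp_of_bounded (ae_of_all _ hv) (hmeas v).aestronglyMeasurable 2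
  calc _ = |cov[u, v; μ]| := by
        rw [covariance_eq_sub hu2 hv2,
          PMF.integral_toMeasure_ofReal _ _ (hu2.integrable_mul hv2),
          PMF.integral_toMeasure_ofReal _ _ (hu2.integrable one_le_two),
          PMF.integral_toMeasure_ofReal _ _ (hv2.integrable one_le_two)]
        simp only [Pi.mul_apply, mul_assoc]
    _ ≤ (Lu - lu) * (Lv - lv) / 4 :=
        abs_covariance_le_of_bounded (ae_of_all _ hu) (ae_of_all _ hv) (hmeas u) (hmeas v)
    _ = _ := by ring
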